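/- Let G = (V,E) be a finite graph, X a Polish space, and μ ∈ P(X^V) with strictly positive density dμ/dμ* with respect to a product measure μ* = ∏_{v∈V} θ_v. If μ is a second-order Markov random field with respect to G, then the density factorizes over the 2-cliques of G: dμ/dμ*(x) = ∏_{K∈cl₂(G)} f_K(x_K) for some nonnegative measurable functions f_K. -/

import Mathlib

open MeasureTheory ProbabilityTheory

section GraphDefs

variable {V : Type*}

/-- The (first) outer boundary of a set of vertices. -/
def graphBdry (G : SimpleGraph V) (A : Set V) : Set V :=
  {u | u ∉ A ∧ ∃ v ∈ A, G.Adj u v}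

/-- The second (double) boundary of a set of vertices. -/
def graphBdry2 (G : SimpleGraph V) (A : Set V) : Set V :=
  graphBdry G A ∪ graphBdry G (A ∪ graphBdry G A)

/-- The square graph: vertices at graph distance 1 or 2 are joined. -/
def sqGraph (G : SimpleGraph V) : SimpleGraph V where
  Adj u v := u ≠ v ∧ G.Reachable u v ∧ G.dist u v ≤ 2
  symm := by
    constructor
    rintro u v ⟨h1, h2, h3⟩
    exact ⟨h1.symm, h2.symm, by rwa [SimpleGraph.dist_comm]⟩
  loopless := by constructor; rintro u ⟨h, -⟩; exact h rfl

/-- A 2-clique: a set of vertices of diameter at most 2. -/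
def TwoClique (G : SimpleGraph V) (K : Set V) : Prop :=
  ∀ u ∈ K, ∀ v ∈ K, u ≠ v → G.Reachable u v ∧ G.dist u v ≤ 2

open scoped Classical in
/-- The finite collection of 2-cliques of a graph on a finite vertex set. -/
noncomputable def cl2Finset (G : SimpleGraph V) [Fintype V] : Finset (Finset V) :=
  Finset.univ.filter fun K => TwoClique G (K : Set V)

end GraphDefs

section MRFDefs

variable {V Ω X : Type*} [MeasurableSpace Ω] [StandardBorelSpace Ω] [Nonempty Ω]
  [MeasurableSpace X]

/-- `Y_A` and `Y_B` are conditionally independent given `Y_S`. -/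
def CondIndepCoords (Y : V → Ω → X) (hY : ∀ v, Measurable (Y v)) (μ : Measure Ω)
    [IsFiniteMeasure μ] (A B S : Set V) : Prop :=
  CondIndepFun
    (MeasurableSpace.comap (fun ω => (fun v : S => Y v ω)) MeasurableSpace.pi)
    ((measurable_pi_iff.mpr fun v : S => hY v).comap_le)
    (fun ω => (fun v : A => Y v ω)) (fun ω => (fun v : B => Y v ω)) μ

/-- First-order Markov random field property on a vertex subset `W`. -/
def IsMRF1On (G : SimpleGraph V) (Y : V → Ω → X) (hY : ∀ v, Measurable (Y v))
    (μ : Measure Ω) [IsFiniteMeasure μ] (W : Set V) : Prop :=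
  ∀ A : Set V, A.Finite → A ⊆ W →
    CondIndepCoords Y hY μ A (W \ (A ∪ graphBdry G A)) (graphBdry G A)

/-- Second-order Markov random field property on a vertex subset `W`. -/
def IsMRF2On (G : SimpleGraph V) (Y : V → Ω → X) (hY : ∀ v, Measurable (Y v))
    (μ : Measure Ω) [IsFiniteMeasure μ] (W : Set V) : Prop :=
  ∀ A : Set V, A.Finite → A ⊆ W →
    CondIndepCoords Y hY μ A (W \ (A ∪ graphBdry2 G A)) (graphBdry2 G A)

end MRFDefs

open scoped ENNReal

/-!
Under `G²` (vertices at distance one or two joined) the second-order boundary of `A` is the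
ordinary boundary of `A`, and the 2-cliques of `G` are the cliques of `G²`; so a second-order Markov
field for `G` is a first-order one for `G²`, and it suffices to prove the classical
Hammersley–Clifford theorem.

For that, fix a vertex `u`, let `S` be its boundary and `B` the remaining vertices. With marginal
densities `D_T = ∫ d dθ_T`, the conditional probability of an event given `x_S` is a ratio of
marginals, and conditional independence of `x_u` and `x_B` given `x_S` becomes the identity
`d · D_{u,B} = D_u · D_B` a.e. Since `D_u` ignores `x_u`, `D_B` ignores `x_B` and `D_{u,B}` ignores
both, `d` satisfies the cross-ratio identity `d(z₀) d(z₃) = d(z₁) d(z₂)` whenever `z₀,…,z₃` differ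
only at `u` and at a vertex `w ∈ B`. Taking `log d` at the configurations `x` on `C`, `ρ` off `C`,
for a suitable reference point `ρ`, its Möbius transform over `C ⊆ V` vanishes on non-cliques by
the cross-ratio identity, and Möbius inversion expresses `log d x` as the sum of the transforms.
A reference point `ρ` for which the identities hold at almost every `x` exists because each
configuration mixing two independent samples from `∏ θ_v` is again distributed as `∏ θ_v`.
-/

namespace SimpleGraph

variable {V : Type*} {G : SimpleGraph V} {u v : V}

theorem sqGraph_adj_iff :
    (sqGraph G).Adj u v ↔ u ≠ v ∧ (G.Adj u v ∨ (G.commonNeighbors u v).Nonempty) := by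
  have hdist : G.Reachable u v ∧ G.dist u v ≤ 2 ↔ G.edist u v ≤ 2 := by
    refine ⟨fun ⟨h, hd⟩ => ?_, fun h => ?_⟩
    · rw [← h.coe_dist_eq_edist]; exact_mod_cast hd
    · have hr : G.Reachable u v := reachable_of_edist_ne_top (ne_top_of_le_ne_top (by simp) h)
      refine ⟨hr, ?_⟩
      rw [← hr.coe_dist_eq_edist] at h; exact_mod_cast h
  change u ≠ v ∧ _ ↔ _
  rw [hdist, ← not_lt, two_lt_edist_iff, Set.nonempty_iff_ne_empty]
  tauto

theorem graphBdry_sqGraph (A : Set V) : graphBdry (sqGraph G) A = graphBdry2 G A := by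
  ext x
  simp only [graphBdry2, graphBdry, Set.mem_union, Set.mem_ofPred_eq, sqGraph_adj_iff,
    Set.Nonempty, mem_commonNeighbors]
  constructor
  · rintro ⟨hxA, v, hvA, -, hxv | ⟨m, hxm, hvm⟩⟩
    · exact Or.inl ⟨hxA, v, hvA, hxv⟩
    · by_cases hx : ∃ v ∈ A, G.Adj x v
      · exact Or.inl ⟨hxA, hx⟩
      · refine Or.inr ⟨fun h => h.elim hxA fun h' => hx h'.2, m, ?_, hxm⟩
        by_cases hmA : m ∈ A
        · exact Or.inl hmA
        · exact Or.inr ⟨hmA, v, hvA, hvm.symm⟩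
  · rintro (⟨hxA, v, hvA, hxv⟩ | ⟨hx, m, hmA | ⟨-, v, hvA, hmv⟩, hxm⟩)
    · exact ⟨hxA, v, hvA, (ne_of_mem_of_not_mem hvA hxA).symm, Or.inl hxv⟩
    · exact ⟨fun h => hx (Or.inl h), m, hmA, (ne_of_mem_of_not_mem hmA fun h => hx (Or.inl h)).symm,
        Or.inl hxm⟩
    · have hxA : x ∉ A := fun h => hx (Or.inl h)
      exact ⟨hxA, v, hvA, (ne_of_mem_of_not_mem hvA hxA).symm, Or.inr ⟨m, hxm, hmv.symm⟩⟩

theorem isClique_sqGraph_iff {K : Set V} : (sqGraph G).IsClique K ↔ TwoClique G K := by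
  refine ⟨fun h u hu v hv huv => (h hu hv huv).2, fun h u hu v hv huv => ⟨huv, h u hu v hv huv⟩⟩

end SimpleGraph

section MRF

variable {V Ω X : Type*} [MeasurableSpace Ω] [StandardBorelSpace Ω]
  [MeasurableSpace X]

theorem isMRF2On_iff_isMRF1On_sqGraph (G : SimpleGraph V) (Y : V → Ω → X)
    (hY : ∀ v, Measurable (Y v)) (μ : Measure Ω) [IsFiniteMeasure μ] (W : Set V) :
    IsMRF2On G Y hY μ W ↔ IsMRF1On (sqGraph G) Y hY μ W := by
  simp only [IsMRF1On, IsMRF2On, SimpleGraph.graphBdry_sqGraph]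

end MRF

namespace MeasureTheory

open Function Filtration
open scoped ProbabilityTheory

section Marginal

variable {δ : Type*} {X : δ → Type*} [∀ i, MeasurableSpace (X i)]
  {μ : ∀ i, Measure (X i)} {s t : Finset δ} {f g : (∀ i, X i) → ℝ≥0∞}

theorem dependsOn_mem_of_measurableSet_piFinset {F : Set (∀ i, X i)}
    (hF : MeasurableSet[piFinset s] F) : DependsOn (· ∈ F) s := by
  obtain ⟨t, -, rfl⟩ := hF
  intro x y hxy
  simp only [Set.mem_preimage]
  rw [show s.restrict x = s.restrict y from funext fun i => hxy i i.2]

theorem dependsOn_indicator_of_measurableSet_piFinset {F : Set (∀ i, X i)} {U : Set δ}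
    (hF : MeasurableSet[piFinset s] F) (hsU : ↑s ⊆ U) (hf : DependsOn f U) :
    DependsOn (F.indicator f) U := by
  intro x y hxy
  have hxyF : (x ∈ F) = (y ∈ F) :=
    dependsOn_mem_of_measurableSet_piFinset hF fun i hi => hxy i (hsU hi)
  classical
  rw [Set.indicator_apply, Set.indicator_apply, hxyF, hf hxy]

theorem measurableSet_piFinset_pi (s : Finset δ) {t : ∀ i, Set (X i)}
    (ht : ∀ i, MeasurableSet (t i)) : MeasurableSet[piFinset s] ((s : Set δ).pi t) :=
  ⟨Set.univ.pi fun i => t i, MeasurableSet.univ_pi fun i => ht i, by ext x; simp⟩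

variable [DecidableEq δ]

theorem _root_.DependsOn.lmarginal {U : Set δ} (hf : DependsOn f U) :
    DependsOn (∫⋯∫⁻_s, f ∂μ) (U \ s) := by
  intro x y hxy
  refine lintegral_congr fun z => hf fun i hi => ?_
  by_cases his : i ∈ s
  · simp [updateFinset, his]
  · simp [updateFinset, his, hxy i ⟨hi, his⟩]

theorem dependsOn_lmarginal (f : (∀ i, X i) → ℝ≥0∞) : DependsOn (∫⋯∫⁻_s, f ∂μ) (↑s)ᶜ := by
  simpa [Set.compl_eq_univ_sdiff] using (dependsOn_univ f).lmarginal (μ := μ) (s := s)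

theorem measurable_piFinset_of_dependsOn {Z : Type*} [MeasurableSpace Z]
    {f : (∀ i, X i) → Z} (hf : Measurable f) (hfs : DependsOn f s) :
    Measurable[piFinset s] f := by
  rcases isEmpty_or_nonempty (∀ i, X i) with h | ⟨⟨x₀⟩⟩
  · exact @measurable_of_empty _ _ (piFinset s) _ h f
  · have hf_eq : f = (f ∘ updateFinset x₀ s) ∘ (s : Set δ).domRestrict :=
      funext fun x => hfs fun i (hi : i ∈ s) => by simp [updateFinset, hi]
    rw [hf_eq]
    exact (hf.comp measurable_updateFinset).comp (comap_measurable _)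

theorem lmarginal_indicator_of_measurableSet_piFinset {F : Set (∀ i, X i)}
    (hF : MeasurableSet[piFinset t] F) (hts : Disjoint t s) :
    ∫⋯∫⁻_s, F.indicator f ∂μ = F.indicator (∫⋯∫⁻_s, f ∂μ) := by
  ext x
  have hmem : ∀ y, (updateFinset x s y ∈ F) = (x ∈ F) := fun y =>
    dependsOn_mem_of_measurableSet_piFinset hF fun i hi => by
      simp [updateFinset, Finset.disjoint_left.mp hts hi]
  by_cases hx : x ∈ F <;> simp [lmarginal, Set.indicator, hmem, hx]

theorem lmarginal_mul_of_dependsOn (hf : DependsOn f (↑s)ᶜ) (hg : Measurable g) :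
    (∫⋯∫⁻_s, (fun x => f x * g x) ∂μ) = fun x => f x * (∫⋯∫⁻_s, g ∂μ) x := by
  ext x
  have hfx : ∀ y, f (updateFinset x s y) = f x := fun y =>
    hf fun i (hi : i ∉ s) => by simp [updateFinset, hi]
  simp only [lmarginal, hfx]
  exact lintegral_const_mul _ (hg.comp measurable_updateFinset)

theorem lmarginal_of_dependsOn [∀ i, IsProbabilityMeasure (μ i)] (hf : DependsOn f (↑s)ᶜ) :
    ∫⋯∫⁻_s, f ∂μ = f := by
  ext x
  have hfx : ∀ y, f (updateFinset x s y) = f x := fun y =>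
    hf fun i (hi : i ∉ s) => by simp [updateFinset, hi]
  simp [lmarginal, hfx]

theorem lmarginal_pos [∀ i, IsProbabilityMeasure (μ i)] (hf : Measurable f)
    (hf_pos : ∀ x, 0 < f x) (x : ∀ i, X i) : 0 < (∫⋯∫⁻_s, f ∂μ) x := by
  refine (lintegral_pos_iff_support (hf.comp measurable_updateFinset)).2 ?_
  simp [Function.support, (hf_pos _).ne']

variable [∀ i, SigmaFinite (μ i)]

theorem lmarginal_union_mul (hst : Disjoint s t) (hf : Measurable f) (hg : Measurable g)
    (hft : DependsOn f (↑t)ᶜ) (hgs : DependsOn g (↑s)ᶜ) :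
    (∫⋯∫⁻_(s ∪ t), (fun x => f x * g x) ∂μ)
      = fun x => (∫⋯∫⁻_s, f ∂μ) x * (∫⋯∫⁻_t, g ∂μ) x := by
  have hgt : DependsOn (∫⋯∫⁻_t, g ∂μ) (↑s)ᶜ := (hgs.lmarginal).mono Set.sdiff_subset
  rw [lmarginal_union μ (fun x => f x * g x) (hf.mul hg) hst, lmarginal_mul_of_dependsOn hft hg]
  simp_rw [mul_comm (f _), lmarginal_mul_of_dependsOn hgt hf, mul_comm]

section Fintype

variable [Fintype δ] [∀ i, IsProbabilityMeasure (μ i)]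

theorem lintegral_mul_lmarginal (hf : Measurable f) (hg : Measurable g)
    (hfs : DependsOn f (↑s)ᶜ) :
    ∫⁻ x, f x * g x ∂Measure.pi μ = ∫⁻ x, f x * (∫⋯∫⁻_s, g ∂μ) x ∂Measure.pi μ := by
  have hfg : DependsOn (fun x => f x * (∫⋯∫⁻_s, g ∂μ) x) (↑s)ᶜ := fun x y hxy => by
    simp only [hfs hxy, dependsOn_lmarginal g hxy]
  refine lintegral_eq_of_lmarginal_eq s (hf.mul hg) (hf.mul (hg.lmarginal μ)) ?_
  rw [lmarginal_mul_of_dependsOn hfs hg, lmarginal_of_dependsOn hfg]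

theorem setLIntegral_mul_lmarginal {E : Set (∀ i, X i)}
    (hE : MeasurableSet[piFinset sᶜ] E) (hf : Measurable f) (hg : Measurable g)
    (hfs : DependsOn f (↑s)ᶜ) :
    ∫⁻ x in E, f x * g x ∂Measure.pi μ = ∫⁻ x in E, f x * (∫⋯∫⁻_s, g ∂μ) x ∂Measure.pi μ := by
  have hE' : MeasurableSet E := piFinset.le _ _ hE
  simp_rw [← lintegral_indicator hE', Set.indicator_mul_left]
  exact lintegral_mul_lmarginal (hf.indicator hE') hg
    (dependsOn_indicator_of_measurableSet_piFinset hE (by simp) hfs)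

theorem setLIntegral_lmarginal {E : Set (∀ i, X i)}
    (hE : MeasurableSet[piFinset sᶜ] E) (hg : Measurable g) :
    ∫⁻ x in E, g x ∂Measure.pi μ = ∫⁻ x in E, (∫⋯∫⁻_s, g ∂μ) x ∂Measure.pi μ := by
  simpa using setLIntegral_mul_lmarginal hE measurable_one hg fun _ _ _ => rfl

theorem lintegral_lmarginal (hf : Measurable f) :
    ∫⁻ x, (∫⋯∫⁻_s, f ∂μ) x ∂Measure.pi μ = ∫⁻ x, f x ∂Measure.pi μ :=
  lintegral_eq_of_lmarginal_eq s (hf.lmarginal μ) hf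
    (lmarginal_of_dependsOn (dependsOn_lmarginal f))

end Fintype

end Marginal

theorem _root_.ENNReal.mul_eq_mul_of_toReal_div_eq_mul {a b c D : ℝ≥0∞} (hD0 : D ≠ 0)
    (hD : D ≠ ∞) (ha : a ≠ ∞) (hb : b ≠ ∞) (hc : c ≠ ∞)
    (h : (a / D).toReal = (b / D).toReal * (c / D).toReal) : a * D = b * c := by
  have hdiv : ∀ e ≠ ∞, e / D < ∞ := fun e he => ENNReal.div_lt_top he hD0
  rw [← ENNReal.toReal_mul, ENNReal.toReal_eq_toReal_iff' (hdiv a ha).ne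
    (ENNReal.mul_lt_top (hdiv b hb) (hdiv c hc)).ne] at h
  have hcancel : ∀ e, e / D * D = e := fun e => ENNReal.div_mul_cancel hD0 hD
  calc a * D = a / D * D * D := by rw [hcancel]
    _ = b / D * D * (c / D * D) := by rw [h]; ring
    _ = b * c := by rw [hcancel, hcancel]

section Density

variable {V X : Type*} [Fintype V] [DecidableEq V] [MeasurableSpace X]
  {θ : V → Measure X} [∀ v, IsProbabilityMeasure (θ v)] {d : (V → X) → ℝ≥0∞}

theorem ae_lmarginal_ne_top [IsFiniteMeasure ((Measure.pi θ).withDensity d)] (hd : Measurable d)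
    (s : Finset V) : ∀ᵐ x ∂Measure.pi θ, (∫⋯∫⁻_s, d ∂θ) x ≠ ∞ := by
  refine ae_lt_top' (hd.lmarginal θ).aemeasurable ?_ |>.mono fun x hx => hx.ne
  rw [lintegral_lmarginal hd, ← setLIntegral_univ, ← withDensity_apply _ MeasurableSet.univ]
  exact measure_ne_top _ _

theorem setLIntegral_lmarginal_div [IsFiniteMeasure ((Measure.pi θ).withDensity d)]
    (hd : Measurable d) (hd_pos : ∀ x, 0 < d x) (S : Finset V) {F E : Set (V → X)}
    (hF : MeasurableSet F) (hE : MeasurableSet[piFinset S] E) :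
    ∫⁻ x in E, (∫⋯∫⁻_Sᶜ, F.indicator d ∂θ) x / (∫⋯∫⁻_Sᶜ, d ∂θ) x ∂(Measure.pi θ).withDensity d
      = (Measure.pi θ).withDensity d (F ∩ E) := by
  set D := ∫⋯∫⁻_Sᶜ, d ∂θ
  set m := ∫⋯∫⁻_Sᶜ, F.indicator d ∂θ
  have hDm : Measurable D := hd.lmarginal θ
  have hm : Measurable m := (hd.indicator hF).lmarginal θ
  have hpS : DependsOn (fun x => m x / D x) (↑Sᶜ)ᶜ := fun x y hxy => by
    simp only [m, D, dependsOn_lmarginal _ hxy]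
  rw [← compl_compl S] at hE
  calc ∫⁻ x in E, m x / D x ∂(Measure.pi θ).withDensity d
      = ∫⁻ x in E, m x / D x * d x ∂Measure.pi θ := by
        rw [setLIntegral_withDensity_eq_setLIntegral_mul _ (g := fun x => m x / D x) hd
          (hm.div hDm) (piFinset.le _ _ hE)]
        simp_rw [Pi.mul_apply, mul_comm (d _)]
    _ = ∫⁻ x in E, m x / D x * D x ∂Measure.pi θ :=
        setLIntegral_mul_lmarginal hE (hm.div hDm) hd hpS
    _ = ∫⁻ x in E, m x ∂Measure.pi θ := by
        refine setLIntegral_congr_fun_ae (piFinset.le _ _ hE)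
          ((ae_lmarginal_ne_top hd Sᶜ).mono fun x hx _ => ?_)
        exact ENNReal.div_mul_cancel (lmarginal_pos hd hd_pos x).ne' hx
    _ = ∫⁻ x in E, F.indicator d x ∂Measure.pi θ :=
        (setLIntegral_lmarginal hE (hd.indicator hF)).symm
    _ = (Measure.pi θ).withDensity d (F ∩ E) := by
        rw [setLIntegral_indicator hF, withDensity_apply _ (hF.inter (piFinset.le _ _ hE)),
          Set.inter_comm]

theorem condExp_indicator_ae_eq_lmarginal_div [IsFiniteMeasure ((Measure.pi θ).withDensity d)]
    (hd : Measurable d) (hd_pos : ∀ x, 0 < d x) (S : Finset V) {F : Set (V → X)}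
    (hF : MeasurableSet F) :
    (Measure.pi θ).withDensity d⟦F | piFinset S⟧ =ᵐ[(Measure.pi θ).withDensity d]
      fun x => ((∫⋯∫⁻_Sᶜ, F.indicator d ∂θ) x / (∫⋯∫⁻_Sᶜ, d ∂θ) x).toReal := by
  set p := fun x => (∫⋯∫⁻_Sᶜ, F.indicator d ∂θ) x / (∫⋯∫⁻_Sᶜ, d ∂θ) x
  have hp : Measurable p := ((hd.indicator hF).lmarginal θ).div (hd.lmarginal θ)
  have hp_le : ∀ x, p x ≤ 1 := fun x => ENNReal.div_le_of_le_mul <| by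
    rw [one_mul]; exact lmarginal_mono (Set.indicator_le_self F d) x
  have hpS : DependsOn p S := fun x y hxy => by
    have h := dependsOn_lmarginal (μ := θ) (s := Sᶜ)
    simp only [Finset.coe_compl, compl_compl] at h
    simp only [p, h d hxy, h (F.indicator d) hxy]
  have hp_int : Integrable (fun x => (p x).toReal) ((Measure.pi θ).withDensity d) := by
    refine integrable_toReal_of_lintegral_ne_top hp.aemeasurable (ne_top_of_le_ne_top ?_
      (lintegral_mono hp_le))
    rw [lintegral_const, one_mul]
    exact measure_ne_top _ _
  refine (ae_eq_condExp_of_forall_setIntegral_eq (piFinset.le S)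
    ((integrable_const 1).indicator hF) (fun E _ _ => hp_int.integrableOn) (fun E hE _ => ?_)
    ?_).symm
  · rw [integral_toReal hp.aemeasurable.restrict
      (ae_of_all _ fun x => (hp_le x).trans_lt ENNReal.one_lt_top),
      setLIntegral_lmarginal_div hd hd_pos S hF hE, setIntegral_indicator hF, setIntegral_const,
      smul_eq_mul, mul_one, Set.inter_comm, measureReal_def]
  · exact (measurable_piFinset_of_dependsOn hp.ennreal_toReal fun x y hxy => by
      rw [hpS hxy]).stronglyMeasurable.aestronglyMeasurable

theorem lmarginal_inter_mul_ae_eq_of_condIndep [StandardBorelSpace X] [Nonempty X]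
    [IsFiniteMeasure ((Measure.pi θ).withDensity d)] (hd : Measurable d) (hd_pos : ∀ x, 0 < d x)
    {A B : Finset V} (hCI : CondIndepCoords (fun v x => x v) (fun v => measurable_pi_apply v)
      ((Measure.pi θ).withDensity d) ↑A ↑B ↑(A ∪ B)ᶜ)
    {F₁ F₂ : Set (V → X)} (h₁ : MeasurableSet[piFinset A] F₁)
    (h₂ : MeasurableSet[piFinset B] F₂) :
    ∀ᵐ x ∂Measure.pi θ,
      (∫⋯∫⁻_(A ∪ B), (F₁ ∩ F₂).indicator d ∂θ) x * (∫⋯∫⁻_(A ∪ B), d ∂θ) x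
        = (∫⋯∫⁻_(A ∪ B), F₁.indicator d ∂θ) x * (∫⋯∫⁻_(A ∪ B), F₂.indicator d ∂θ) x := by
  obtain ⟨s₁, hs₁, rfl⟩ := h₁
  obtain ⟨s₂, hs₂, rfl⟩ := h₂
  have hprod := (condIndepFun_iff_condExp_inter_preimage_eq_mul
    (A : Set V).measurable_restrict (B : Set V).measurable_restrict).1 hCI s₁ s₂ hs₁ hs₂
  set μ := (Measure.pi θ).withDensity d
  have hformula : ∀ F, MeasurableSet F → μ⟦F | piFinset (A ∪ B)ᶜ⟧ =ᵐ[μ] fun x =>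
      ((∫⋯∫⁻_(A ∪ B), F.indicator d ∂θ) x / (∫⋯∫⁻_(A ∪ B), d ∂θ) x).toReal := fun F hF => by
    simpa using condExp_indicator_ae_eq_lmarginal_div (θ := θ) hd hd_pos (A ∪ B)ᶜ hF
  have h1 := hformula _ ((A : Set V).measurable_restrict hs₁)
  have h2 := hformula _ ((B : Set V).measurable_restrict hs₂)
  have h12 := hformula _
    (((A : Set V).measurable_restrict hs₁).inter ((B : Set V).measurable_restrict hs₂))
  have hμ := (ae_withDensity_iff hd).1 (h12.symm.trans (hprod.trans (h1.mul h2)))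
  filter_upwards [hμ, ae_lmarginal_ne_top hd (A ∪ B)] with x hx hD
  have hfin : ∀ F : Set (V → X), (∫⋯∫⁻_(A ∪ B), F.indicator d ∂θ) x ≠ ∞ := fun F =>
    ne_top_of_le_ne_top hD (lmarginal_mono (Set.indicator_le_self F d) x)
  exact ENNReal.mul_eq_mul_of_toReal_div_eq_mul (lmarginal_pos hd hd_pos x).ne' hD (hfin _)
    (hfin _) (hfin _) (hx (hd_pos x).ne')

theorem setLIntegral_lmarginal_mul_lmarginal_div (hd : Measurable d) {A B : Finset V}
    (hAB : Disjoint A B) {F₁ F₂ E : Set (V → X)} (h₁ : MeasurableSet[piFinset A] F₁)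
    (h₂ : MeasurableSet[piFinset B] F₂) (hE : MeasurableSet[piFinset (A ∪ B)ᶜ] E) :
    ∫⁻ x in F₁ ∩ F₂ ∩ E, (∫⋯∫⁻_A, d ∂θ) x * (∫⋯∫⁻_B, d ∂θ) x / (∫⋯∫⁻_(A ∪ B), d ∂θ) x
        ∂Measure.pi θ
      = ∫⁻ x in E, (∫⋯∫⁻_(A ∪ B), F₁.indicator d ∂θ) x * (∫⋯∫⁻_(A ∪ B), F₂.indicator d ∂θ) x
          / (∫⋯∫⁻_(A ∪ B), d ∂θ) x ∂Measure.pi θ := by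
  set DA := ∫⋯∫⁻_A, d ∂θ
  set DB := ∫⋯∫⁻_B, d ∂θ
  set D := ∫⋯∫⁻_(A ∪ B), d ∂θ
  have hF₁ : MeasurableSet F₁ := piFinset.le _ _ h₁
  have hF₂ : MeasurableSet F₂ := piFinset.le _ _ h₂
  have hDinv : DependsOn (fun x => (D x)⁻¹) (↑(A ∪ B))ᶜ := fun x y hxy => by
    simp only [D, dependsOn_lmarginal d hxy]
  have hm₁ : ∫⋯∫⁻_A, F₁.indicator DB ∂θ = ∫⋯∫⁻_(A ∪ B), F₁.indicator d ∂θ := by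
    rw [← lmarginal_indicator_of_measurableSet_piFinset h₁ hAB,
      lmarginal_union θ _ (hd.indicator hF₁) hAB]
  have hm₂ : ∫⋯∫⁻_B, F₂.indicator DA ∂θ = ∫⋯∫⁻_(A ∪ B), F₂.indicator d ∂θ := by
    rw [← lmarginal_indicator_of_measurableSet_piFinset h₂ hAB.symm,
      lmarginal_union' θ _ (hd.indicator hF₂) hAB]
  calc ∫⁻ x in F₁ ∩ F₂ ∩ E, DA x * DB x / D x ∂Measure.pi θ
      = ∫⁻ x in E, (D x)⁻¹ * (F₁.indicator DB x * F₂.indicator DA x) ∂Measure.pi θ := by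
        rw [← setLIntegral_indicator (hF₁.inter hF₂)]
        refine setLIntegral_congr_fun (piFinset.le _ _ hE) fun x _ => ?_
        by_cases hx₁ : x ∈ F₁ <;> by_cases hx₂ : x ∈ F₂ <;>
          simp [hx₁, hx₂, div_eq_mul_inv, mul_comm]
    _ = ∫⁻ x in E, (D x)⁻¹ * (∫⋯∫⁻_(A ∪ B), fun x => F₁.indicator DB x * F₂.indicator DA x ∂θ) x
          ∂Measure.pi θ :=
        setLIntegral_mul_lmarginal hE (hd.lmarginal θ).inv
          (((hd.lmarginal θ).indicator hF₁).mul ((hd.lmarginal θ).indicator hF₂)) hDinv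
    _ = _ := by
        have hAB' := Finset.disjoint_coe.2 hAB
        rw [lmarginal_union_mul hAB ((hd.lmarginal θ).indicator hF₁)
          ((hd.lmarginal θ).indicator hF₂)
          (dependsOn_indicator_of_measurableSet_piFinset h₁ hAB'.subset_compl_right
            (dependsOn_lmarginal d))
          (dependsOn_indicator_of_measurableSet_piFinset h₂ hAB'.subset_compl_left
            (dependsOn_lmarginal d)), hm₁, hm₂]
        simp_rw [div_eq_mul_inv, mul_comm (D _)⁻¹]

theorem withDensity_eq_withDensity_lmarginal_mul_div_of_condIndep [StandardBorelSpace X]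
    [Nonempty X] [IsFiniteMeasure ((Measure.pi θ).withDensity d)] (hd : Measurable d)
    (hd_pos : ∀ x, 0 < d x) {A B : Finset V} (hAB : Disjoint A B)
    (hCI : CondIndepCoords (fun v x => x v) (fun v => measurable_pi_apply v)
      ((Measure.pi θ).withDensity d) ↑A ↑B ↑(A ∪ B)ᶜ) :
    (Measure.pi θ).withDensity d = (Measure.pi θ).withDensity fun x =>
      (∫⋯∫⁻_A, d ∂θ) x * (∫⋯∫⁻_B, d ∂θ) x / (∫⋯∫⁻_(A ∪ B), d ∂θ) x := by
  have hbox : ∀ t : V → Set X, (∀ v, MeasurableSet (t v)) →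
      (Measure.pi θ).withDensity d (Set.univ.pi t) = (Measure.pi θ).withDensity
        (fun x => (∫⋯∫⁻_A, d ∂θ) x * (∫⋯∫⁻_B, d ∂θ) x / (∫⋯∫⁻_(A ∪ B), d ∂θ) x)
        (Set.univ.pi t) := by
    intro t ht
    have h₁ := measurableSet_piFinset_pi A ht
    have h₂ := measurableSet_piFinset_pi B ht
    have hE := measurableSet_piFinset_pi (A ∪ B)ᶜ ht
    have h₁₂ : MeasurableSet ((A : Set V).pi t ∩ (B : Set V).pi t) :=
      (piFinset.le _ _ h₁).inter (piFinset.le _ _ h₂)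
    have hbox_eq : Set.univ.pi t
        = (A : Set V).pi t ∩ (B : Set V).pi t ∩ (↑(A ∪ B)ᶜ : Set V).pi t := by
      rw [← Set.union_pi, ← Set.union_pi, ← Finset.coe_union, Finset.coe_compl,
        Set.union_compl_self]
    have hmeas : MeasurableSet (Set.univ.pi t) := MeasurableSet.univ_pi ht
    rw [withDensity_apply _ hmeas, withDensity_apply _ hmeas, hbox_eq,
      setLIntegral_lmarginal_mul_lmarginal_div hd hAB h₁ h₂ hE, ← setLIntegral_indicator h₁₂,
      setLIntegral_lmarginal hE (hd.indicator h₁₂)]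
    refine setLIntegral_congr_fun_ae (piFinset.le _ _ hE) ?_
    filter_upwards [lmarginal_inter_mul_ae_eq_of_condIndep hd hd_pos hCI h₁ h₂,
      ae_lmarginal_ne_top hd (A ∪ B)] with x hx hD _
    rw [ENNReal.eq_div_iff (lmarginal_pos hd hd_pos x).ne' hD, mul_comm, hx]
  refine ext_of_generate_finite _ generateFrom_pi.symm isPiSystem_pi ?_ ?_
  · rintro _ ⟨t, ht, rfl⟩
    exact hbox t fun v => ht v trivial
  · simpa using hbox (fun _ => Set.univ) fun _ => MeasurableSet.univ

theorem mul_lmarginal_ae_eq_of_condIndep [StandardBorelSpace X] [Nonempty X]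
    [IsFiniteMeasure ((Measure.pi θ).withDensity d)] (hd : Measurable d) (hd_pos : ∀ x, 0 < d x)
    {A B : Finset V} (hAB : Disjoint A B)
    (hCI : CondIndepCoords (fun v x => x v) (fun v => measurable_pi_apply v)
      ((Measure.pi θ).withDensity d) ↑A ↑B ↑(A ∪ B)ᶜ) :
    ∀ᵐ x ∂Measure.pi θ,
      d x * (∫⋯∫⁻_(A ∪ B), d ∂θ) x = (∫⋯∫⁻_A, d ∂θ) x * (∫⋯∫⁻_B, d ∂θ) x := by
  have hd₂ : Measurable fun x => (∫⋯∫⁻_A, d ∂θ) x * (∫⋯∫⁻_B, d ∂θ) x / (∫⋯∫⁻_(A ∪ B), d ∂θ) x :=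
    ((hd.lmarginal θ).mul (hd.lmarginal θ)).div (hd.lmarginal θ)
  filter_upwards [(withDensity_eq_iff_of_sigmaFinite hd.aemeasurable hd₂.aemeasurable).1
      (withDensity_eq_withDensity_lmarginal_mul_div_of_condIndep hd hd_pos hAB hCI),
    ae_lmarginal_ne_top hd (A ∪ B)] with x hx hD
  rw [hx]
  exact ENNReal.div_mul_cancel (lmarginal_pos hd hd_pos x).ne' hD

end Density

section Piecewise

variable {δ : Type*} [Fintype δ] [DecidableEq δ] {X : δ → Type*} [∀ i, MeasurableSpace (X i)]
  (μ : ∀ i, Measure (X i)) [∀ i, IsProbabilityMeasure (μ i)]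

theorem measurePreserving_piecewise (s : Finset δ) :
    MeasurePreserving (fun p : (∀ i, X i) × (∀ i, X i) => s.piecewise p.1 p.2)
      ((Measure.pi μ).prod (Measure.pi μ)) (Measure.pi μ) := by
  have hm : Measurable fun p : (∀ i, X i) × (∀ i, X i) => s.piecewise p.1 p.2 :=
    measurable_pi_lambda _ fun i => by
      by_cases hi : i ∈ s <;> simp only [Finset.piecewise, hi, if_true, if_false] <;> fun_prop
  refine ⟨hm, (Measure.pi_eq fun t ht => ?_).symm⟩
  have hpre : (fun p : (∀ i, X i) × (∀ i, X i) => s.piecewise p.1 p.2) ⁻¹' Set.univ.pi t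
      = (Set.univ.pi fun i => if i ∈ s then t i else Set.univ)
        ×ˢ (Set.univ.pi fun i => if i ∈ s then Set.univ else t i) := by
    ext p
    simp only [Set.mem_preimage, Set.mem_pi, Set.mem_univ, true_implies, Set.mem_prod,
      Finset.piecewise, ← forall_and]
    refine forall_congr' fun i => ?_
    by_cases hi : i ∈ s <;> simp [hi]
  rw [Measure.map_apply hm (MeasurableSet.univ_pi ht), hpre, Measure.prod_prod, Measure.pi_pi,
    Measure.pi_pi, ← Finset.prod_mul_distrib]
  refine Finset.prod_congr rfl fun i _ => ?_
  by_cases hi : i ∈ s <;> simp [hi]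

end Piecewise

section CrossRatio

variable {V X : Type*} [DecidableEq V]

theorem mul_eq_mul_of_mul_eq_mul_of_dependsOn {A B : Finset V} {f a b c : (V → X) → ℝ≥0∞}
    (ha : DependsOn a (↑A)ᶜ) (hb : DependsOn b (↑B)ᶜ) (hc : DependsOn c (↑(A ∪ B))ᶜ)
    {z₀ z₁ z₂ z₃ : V → X} (h₁₀ : ∀ i ∉ A, z₁ i = z₀ i) (h₂₀ : ∀ i ∉ B, z₂ i = z₀ i)
    (h₃₁ : ∀ i ∉ B, z₃ i = z₁ i) (h₃₂ : ∀ i ∉ A, z₃ i = z₂ i)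
    (hf : ∀ z ∈ ({z₀, z₁, z₂, z₃} : Set (V → X)), f z * c z = a z * b z)
    (hc₀ : c z₀ ≠ 0) (hc₀' : c z₀ ≠ ∞) : f z₀ * f z₃ = f z₁ * f z₂ := by
  have hc₁ : c z₁ = c z₀ := hc fun i hi => h₁₀ i (by simp_all)
  have hc₂ : c z₂ = c z₀ := hc fun i hi => h₂₀ i (by simp_all)
  have hc₃ : c z₃ = c z₀ := hc fun i hi => by
    simp only [Finset.coe_union, Set.mem_compl_iff, Set.mem_union, Finset.mem_coe, not_or] at hi
    rw [h₃₁ i hi.2, h₁₀ i hi.1]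
  have e₀ := hf z₀ (by simp)
  have e₁ := hf z₁ (by simp)
  have e₂ := hf z₂ (by simp)
  have e₃ := hf z₃ (by simp)
  rw [hc₁] at e₁
  rw [hc₂] at e₂
  rw [hc₃] at e₃
  refine (ENNReal.mul_right_inj (mul_ne_zero hc₀ hc₀) (ENNReal.mul_ne_top hc₀' hc₀')).1 ?_
  calc c z₀ * c z₀ * (f z₀ * f z₃) = (f z₀ * c z₀) * (f z₃ * c z₀) := by ring
    _ = (a z₁ * b z₀) * (a z₂ * b z₁) := by
      rw [e₀, e₃, ha fun i hi => (h₁₀ i hi).symm, hb fun i hi => h₃₁ i hi, ha fun i hi => h₃₂ i hi]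
    _ = (f z₁ * c z₀) * (f z₂ * c z₀) := by
      rw [e₁, e₂, hb fun i hi => (h₂₀ i hi).symm]; ring
    _ = c z₀ * c z₀ * (f z₁ * f z₂) := by ring

variable [Fintype V] [MeasurableSpace X] {θ : V → Measure X} [∀ v, IsProbabilityMeasure (θ v)]
  {d : (V → X) → ℝ≥0∞}

theorem cross_ratio_ae_of_mul_lmarginal_ae_eq [IsFiniteMeasure ((Measure.pi θ).withDensity d)]
    (hd : Measurable d) (hd_pos : ∀ x, 0 < d x) {A B : Finset V}
    (hloc : ∀ᵐ x ∂Measure.pi θ,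
      d x * (∫⋯∫⁻_(A ∪ B), d ∂θ) x = (∫⋯∫⁻_A, d ∂θ) x * (∫⋯∫⁻_B, d ∂θ) x)
    {u w : V} (hu : u ∈ A) (hw : w ∈ B) (C : Finset V) :
    ∀ᵐ p ∂(Measure.pi θ).prod (Measure.pi θ),
      d (C.piecewise p.1 p.2) * d ((insert u (insert w C)).piecewise p.1 p.2)
        = d ((insert u C).piecewise p.1 p.2) * d ((insert w C).piecewise p.1 p.2) := by
  have hpull {P : (V → X) → Prop} (hP : ∀ᵐ x ∂Measure.pi θ, P x) (C' : Finset V) :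
      ∀ᵐ p ∂(Measure.pi θ).prod (Measure.pi θ), P (C'.piecewise p.1 p.2) :=
    (measurePreserving_piecewise θ C').quasiMeasurePreserving.ae hP
  filter_upwards [hpull hloc C, hpull hloc (insert u C), hpull hloc (insert w C),
    hpull hloc (insert u (insert w C)), hpull (ae_lmarginal_ne_top hd (A ∪ B)) C]
    with p e₀ e₁ e₂ e₃ hfin
  refine mul_eq_mul_of_mul_eq_mul_of_dependsOn (dependsOn_lmarginal d) (dependsOn_lmarginal d)
    (dependsOn_lmarginal d) (fun i hi => ?_) (fun i hi => ?_) (fun i hi => ?_) (fun i hi => ?_)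
    (by
      simp only [Set.mem_insert_iff, Set.mem_singleton_iff]
      rintro z (rfl | rfl | rfl | rfl) <;> assumption)
    (lmarginal_pos hd hd_pos _).ne' hfin
  · simp [Finset.piecewise_insert, Function.update_of_ne (ne_of_mem_of_not_mem hu hi).symm]
  · simp [Finset.piecewise_insert, Function.update_of_ne (ne_of_mem_of_not_mem hw hi).symm]
  · rw [Finset.insert_comm]
    simp [Finset.piecewise_insert, Function.update_of_ne (ne_of_mem_of_not_mem hw hi).symm]
  · simp [Finset.piecewise_insert, Function.update_of_ne (ne_of_mem_of_not_mem hu hi).symm]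

end CrossRatio

end MeasureTheory

namespace Finset

variable {V R : Type*} [DecidableEq V] [CommRing R]

def moebiusTransform (g : Finset V → R) (A : Finset V) : R :=
  ∑ B ∈ A.powerset, (-1) ^ (A.card + B.card) * g B

theorem moebiusTransform_insert (g : Finset V → R) {u : V} {A : Finset V} (hu : u ∉ A) :
    moebiusTransform g (insert u A) = moebiusTransform (fun B => g (insert u B) - g B) A := by
  rw [moebiusTransform, moebiusTransform, sum_powerset_insert hu, ← sum_add_distrib]
  refine sum_congr rfl fun B hB => ?_
  rw [card_insert_of_notMem hu, card_insert_of_notMem fun h => hu (mem_powerset.1 hB h)]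
  ring

theorem sum_moebiusTransform (g : Finset V → R) (U : Finset V) :
    ∑ A ∈ U.powerset, moebiusTransform g A = g U := by
  induction U using Finset.induction_on generalizing g with
  | empty => simp [moebiusTransform]
  | insert u U hu ih =>
    rw [sum_powerset_insert hu, ih, sum_congr rfl fun A hA =>
      moebiusTransform_insert g fun h => hu (mem_powerset.1 hA h), ih]
    ring

theorem moebiusTransform_eq_zero {g : Finset V → R} {A : Finset V} {u w : V} (hu : u ∈ A)
    (hw : w ∈ A) (huw : u ≠ w)
    (hg : ∀ B, u ∉ B → w ∉ B → g B + g (insert u (insert w B)) = g (insert u B) + g (insert w B)) :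
    moebiusTransform g A = 0 := by
  set A' := (A.erase u).erase w
  have hwA' : w ∉ A' := notMem_erase w _
  have huA' : u ∉ insert w A' := by simp [A', huw]
  rw [show A = insert u (insert w A') by
      rw [insert_erase (mem_erase.2 ⟨huw.symm, hw⟩), insert_erase hu],
    moebiusTransform_insert g huA', moebiusTransform_insert _ hwA']
  refine sum_eq_zero fun B hB => ?_
  have hwB : w ∉ B := fun h => hwA' (mem_powerset.1 hB h)
  have huB : u ∉ B := fun h => huA' (mem_insert_of_mem (mem_powerset.1 hB h))
  beta_reduce
  linear_combination (-1 : R) ^ (A'.card + B.card) * hg B huB hwB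

end Finset

section HammersleyClifford

open MeasureTheory Finset

variable {V X : Type*} [DecidableEq V] {d : (V → X) → ℝ≥0∞}

noncomputable def cliquePotential (d : (V → X) → ℝ≥0∞) (ρ : V → X) (K : Finset V)
    (x : V → X) : ℝ≥0∞ :=
  ENNReal.ofReal (Real.exp (moebiusTransform (fun B => Real.log (d (B.piecewise x ρ)).toReal) K))

theorem measurable_cliquePotential [MeasurableSpace X] (hd : Measurable d) (ρ : V → X)
    (K : Finset V) :
    Measurable (cliquePotential d ρ K) := by
  have hpw : ∀ B : Finset V, Measurable fun x : V → X => B.piecewise x ρ := fun B =>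
    measurable_pi_lambda _ fun v => by
      by_cases hv : v ∈ B <;> simp only [Finset.piecewise, hv, if_true, if_false] <;> fun_prop
  refine ENNReal.measurable_ofReal.comp (Real.measurable_exp.comp ?_)
  exact Finset.measurable_sum _ fun B _ =>
    ((Real.measurable_log.comp (hd.comp (hpw B)).ennreal_toReal)).const_mul _

theorem dependsOn_cliquePotential (d : (V → X) → ℝ≥0∞) (ρ : V → X) (K : Finset V) :
    DependsOn (cliquePotential d ρ K) K := by
  intro x y hxy
  refine congrArg (fun r => ENNReal.ofReal (Real.exp r)) (sum_congr rfl fun B hB => ?_)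
  have hpw : B.piecewise x ρ = B.piecewise y ρ := by
    ext v
    by_cases hv : v ∈ B
    · simp [hv, hxy v (mem_powerset.1 hB hv)]
    · simp [hv]
  simp only [hpw]

variable [Fintype V]

open scoped Classical in
theorem prod_cliquePotential_eq (H : SimpleGraph V) (hd_pos : ∀ x, 0 < d x) {ρ x : V → X}
    (hfin : ∀ C : Finset V, d (C.piecewise x ρ) ≠ ∞)
    (hcross : ∀ u w, u ≠ w → ¬ H.Adj u w → ∀ C : Finset V,
      d (C.piecewise x ρ) * d ((insert u (insert w C)).piecewise x ρ)
        = d ((insert u C).piecewise x ρ) * d ((insert w C).piecewise x ρ)) :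
    ∏ K ∈ univ.filter (fun K : Finset V => H.IsClique (K : Set V)), cliquePotential d ρ K x
      = d x := by
  set g := fun B : Finset V => Real.log (d (B.piecewise x ρ)).toReal
  have hpos : ∀ C : Finset V, (d (C.piecewise x ρ)).toReal ≠ 0 := fun C =>
    (ENNReal.toReal_pos (hd_pos _).ne' (hfin C)).ne'
  have hvanish : ∀ K : Finset V, moebiusTransform g K ≠ 0 → H.IsClique (K : Set V) := by
    intro K hK u hu w hw huw
    by_contra hadj
    refine hK (moebiusTransform_eq_zero hu hw huw fun C _ _ => ?_)
    simp only [g, ← Real.log_mul (hpos _) (hpos _), ← ENNReal.toReal_mul, hcross u w huw hadj C]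
  have hsum : ∑ K ∈ univ.filter (fun K : Finset V => H.IsClique (K : Set V)),
      moebiusTransform g K = Real.log (d x).toReal := by
    rw [sum_filter_of_ne fun K _ => hvanish K, ← powerset_univ, sum_moebiusTransform]
    simp [g]
  simp only [cliquePotential]
  rw [← ENNReal.ofReal_prod_of_nonneg fun _ _ => (Real.exp_pos _).le, ← Real.exp_sum, hsum,
    Real.exp_log (ENNReal.toReal_pos (hd_pos x).ne' (by simpa using hfin univ)),
    ENNReal.ofReal_toReal (by simpa using hfin univ)]

variable [MeasurableSpace X] {θ : V → Measure X} [∀ v, IsProbabilityMeasure (θ v)]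

open scoped Classical in
theorem exists_clique_factorization_of_cross_ratio (H : SimpleGraph V)
    [IsFiniteMeasure ((Measure.pi θ).withDensity d)] (hd : Measurable d) (hd_pos : ∀ x, 0 < d x)
    (hcross : ∀ u w, u ≠ w → ¬ H.Adj u w → ∀ C : Finset V,
      ∀ᵐ p ∂(Measure.pi θ).prod (Measure.pi θ),
        d (C.piecewise p.1 p.2) * d ((insert u (insert w C)).piecewise p.1 p.2)
          = d ((insert u C).piecewise p.1 p.2) * d ((insert w C).piecewise p.1 p.2)) :
    ∃ f : Finset V → (V → X) → ℝ≥0∞, (∀ K, Measurable (f K)) ∧ (∀ K, DependsOn (f K) K) ∧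
      (Measure.pi θ).withDensity d = (Measure.pi θ).withDensity fun x =>
        ∏ K ∈ univ.filter (fun K : Finset V => H.IsClique (K : Set V)), f K x := by
  have hd_fin : ∀ᵐ x ∂Measure.pi θ, d x ≠ ∞ := by
    simpa using ae_lmarginal_ne_top (θ := θ) hd ∅
  have hgood : ∀ᵐ p ∂(Measure.pi θ).prod (Measure.pi θ),
      (∀ C : Finset V, d (C.piecewise p.1 p.2) ≠ ∞) ∧ ∀ u w, u ≠ w → ¬ H.Adj u w → ∀ C : Finset V,
        d (C.piecewise p.1 p.2) * d ((insert u (insert w C)).piecewise p.1 p.2)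
          = d ((insert u C).piecewise p.1 p.2) * d ((insert w C).piecewise p.1 p.2) := by
    refine (ae_all_iff.2 fun C => ?_).and ?_
    · exact (measurePreserving_piecewise θ C).quasiMeasurePreserving.ae hd_fin
    · simpa only [ae_all_iff, Filter.eventually_imp_distrib_left] using hcross
  obtain ⟨ρ, hρ⟩ := (Measure.ae_ae_of_ae_prod
    (Measure.measurePreserving_swap.quasiMeasurePreserving.ae hgood)).exists
  refine ⟨cliquePotential d ρ, measurable_cliquePotential hd ρ, dependsOn_cliquePotential d ρ,
    withDensity_congr_ae (hρ.mono fun x hx => ?_)⟩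
  exact (prod_cliquePotential_eq H hd_pos hx.1 hx.2).symm

open scoped Classical in
theorem exists_clique_factorization_of_isMRF1On [StandardBorelSpace X] [Nonempty X]
    (H : SimpleGraph V) [IsFiniteMeasure ((Measure.pi θ).withDensity d)] (hd : Measurable d)
    (hd_pos : ∀ x, 0 < d x)
    (hMRF : IsMRF1On H (fun v x => x v) (fun v => measurable_pi_apply v)
      ((Measure.pi θ).withDensity d) Set.univ) :
    ∃ f : Finset V → (V → X) → ℝ≥0∞, (∀ K, Measurable (f K)) ∧ (∀ K, DependsOn (f K) K) ∧
      (Measure.pi θ).withDensity d = (Measure.pi θ).withDensity fun x =>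
        ∏ K ∈ univ.filter (fun K : Finset V => H.IsClique (K : Set V)), f K x := by
  refine exists_clique_factorization_of_cross_ratio H hd hd_pos fun u w huw hadj C => ?_
  obtain ⟨N, hN⟩ := (Set.toFinite (graphBdry H {u})).exists_finset_coe
  have huN : u ∉ N := by simp [← Finset.mem_coe, hN, graphBdry]
  have hwN : w ∉ N := by
    rw [← Finset.mem_coe, hN]
    rintro ⟨-, v, rfl, hwv⟩
    exact hadj hwv.symm
  have hCI : CondIndepCoords (fun v x => x v) (fun v => measurable_pi_apply v)
      ((Measure.pi θ).withDensity d) ↑({u} : Finset V) ↑(insert u N)ᶜ ↑({u} ∪ (insert u N)ᶜ)ᶜ := by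
    convert hMRF {u} (Set.finite_singleton u) (Set.subset_univ _) using 2 <;> ext v <;>
      by_cases hv : v = u <;> simp [hv, ← hN, huN]
  refine cross_ratio_ae_of_mul_lmarginal_ae_eq hd hd_pos
    (mul_lmarginal_ae_eq_of_condIndep hd hd_pos ?_ hCI) (mem_singleton_self u) ?_ C
  · simp
  · simp [huw.symm, hwN]

end HammersleyClifford

open scoped Classical in
theorem cl2Finset_eq_filter_isClique_sqGraph {V : Type*} [Fintype V] (G : SimpleGraph V) :
    cl2Finset G = Finset.univ.filter fun K : Finset V => (sqGraph G).IsClique (K : Set V) := by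
  simp only [cl2Finset, SimpleGraph.isClique_sqGraph_iff]

/-- Second-order Hammersley–Clifford, converse direction: if `μ` has a strictly positive
density with respect to a product measure and is a second-order Markov random field with
respect to a finite graph `G`, then the density factorizes over the 2-cliques of `G`. -/
theorem twoClique_factorization_of_isMRF2 {V X : Type*} [Fintype V]
    [MeasurableSpace X] [StandardBorelSpace X] [Nonempty X]
    (G : SimpleGraph V) (θ : V → Measure X) [∀ v, IsProbabilityMeasure (θ v)]
    (d : (V → X) → ℝ≥0∞) (hdmeas : Measurable d) (hdpos : ∀ x, 0 < d x)
    (μ : Measure (V → X)) [IsProbabilityMeasure μ]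
    (hμ : μ = (Measure.pi θ).withDensity d)
    (hMRF : IsMRF2On G (fun v x => x v) (fun v => measurable_pi_apply v) μ Set.univ) :
    ∃ f : Finset V → (V → X) → ℝ≥0∞,
      (∀ K, Measurable (f K)) ∧
      (∀ K, ∀ x y : V → X, (∀ v ∈ K, x v = y v) → f K x = f K y) ∧
      μ = (Measure.pi θ).withDensity (fun x => ∏ K ∈ cl2Finset G, f K x) := by
  classical
  subst hμ
  rw [isMRF2On_iff_isMRF1On_sqGraph] at hMRF
  obtain ⟨f, hf_meas, hf_dep, hf⟩ :=
    exists_clique_factorization_of_isMRF1On (sqGraph G) hdmeas hdpos hMRF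
  refine ⟨f, hf_meas, fun K x y hxy => hf_dep K hxy, ?_⟩
  rw [hf, cl2Finset_eq_filter_isClique_sqGraph]
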